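/- If G is a simple graph with girth at least 5, 45 vertices, and 145 edges, and Δ is its maximum degree, then Σ_{v ∈ V, deg(v) ≤ 5} (6 - deg(v)) ≥ 6Δ - 44. -/
import Mathlib

open SimpleGraph Finset

lemma cyc5 {V : Type*} (G : SimpleGraph V) (hg : 5 ≤ G.girth) :
    ∀ (a : V) (w : G.Walk a a), w.IsCycle → 5 ≤ w.length := by
  intro a w hw
  have h : (5 : ℕ∞) ≤ G.egirth := by
    rcases eq_or_ne G.egirth ⊤ with h | h
    · simp [h]
    · rw [← ENat.coe_toNat h]; exact_mod_cast hg
  exact_mod_cast SimpleGraph.le_egirth.mp h a w hw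

lemma no_tri {V : Type*} (G : SimpleGraph V) (hg : 5 ≤ G.girth)
    {a b c : V} (hab : G.Adj a b) (hbc : G.Adj b c) (hca : G.Adj c a) : False := by
  have hcyc : (Walk.cons hab (Walk.cons hbc (Walk.cons hca Walk.nil))).IsCycle := by
    simp [Walk.isCycle_def, Walk.isTrail_def, hab.ne, hbc.ne, hca.ne, hab.ne', hbc.ne', hca.ne',
      Sym2.eq_iff]
  have := cyc5 G hg a _ hcyc
  simp at this

lemma no_quad {V : Type*} (G : SimpleGraph V) (hg : 5 ≤ G.girth)
    {a b c d : V} (hab : G.Adj a b) (hbc : G.Adj b c) (hcd : G.Adj c d) (hda : G.Adj d a)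
    (hac : a ≠ c) (hbd : b ≠ d) : False := by
  have hcyc : (Walk.cons hab (Walk.cons hbc (Walk.cons hcd (Walk.cons hda Walk.nil)))).IsCycle := by
    simp [Walk.isCycle_def, Walk.isTrail_def, hab.ne, hbc.ne, hcd.ne, hda.ne, hac, hbd,
      hab.ne', hbc.ne', hcd.ne', hda.ne', hac.symm, hbd.symm, Sym2.eq_iff]
  have := cyc5 G hg a _ hcyc
  simp at this

-- key counting lemma: sum of degrees over a neighborhood ≤ n - 1
lemma key {V : Type*} [Fintype V] (G : SimpleGraph V) [DecidableRel G.Adj]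
    (hg : 5 ≤ G.girth) (v : V) :
    ∑ w ∈ G.neighborFinset v, G.degree w ≤ Fintype.card V - 1 := by
  classical
  set N := G.neighborFinset v with hN
  have hmemN : ∀ w, w ∈ N → G.Adj v w := by intro w hw; rwa [hN, mem_neighborFinset] at hw
  -- pairwise disjoint erased neighborhoods
  have hdisj : ∀ w ∈ N, ∀ w' ∈ N, w ≠ w' →
      Disjoint ((G.neighborFinset w).erase v) ((G.neighborFinset w').erase v) := by
    intro w hw w' hw' hne
    rw [Finset.disjoint_left]
    intro u hu hu'
    rw [Finset.mem_erase, mem_neighborFinset] at hu hu'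
    exact no_quad G hg (hmemN w hw) hu.2 hu'.2.symm (hmemN w' hw').symm
      (fun h => hu.1 h.symm) hne
  set B := N.biUnion (fun w => (G.neighborFinset w).erase v) with hB
  have hcardB : B.card = ∑ w ∈ N, ((G.neighborFinset w).erase v).card :=
    Finset.card_biUnion hdisj
  have herase : ∀ w ∈ N, ((G.neighborFinset w).erase v).card + 1 = G.degree w := by
    intro w hw
    rw [Finset.card_erase_of_mem (by rw [mem_neighborFinset]; exact (hmemN w hw).symm)]
    have : 1 ≤ (G.neighborFinset w).card :=
      Finset.card_pos.mpr ⟨v, by rw [mem_neighborFinset]; exact (hmemN w hw).symm⟩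
    rw [SimpleGraph.degree]
    omega
  have hsum : ∑ w ∈ N, G.degree w = B.card + N.card := by
    rw [hcardB, ← Finset.sum_add_distrib.symm.trans (Finset.sum_congr rfl herase)]
    simp
  have hdisjNB : Disjoint N B := by
    rw [Finset.disjoint_left]
    intro w' hw' hw'B
    rw [hB, Finset.mem_biUnion] at hw'B
    obtain ⟨w, hw, hw'e⟩ := hw'B
    rw [Finset.mem_erase, mem_neighborFinset] at hw'e
    exact no_tri G hg (hmemN w hw) hw'e.2 (hmemN w' hw').symm
  have hvnot : v ∉ N ∪ B := by
    rw [Finset.mem_union]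
    rintro (h | h)
    · exact G.notMem_neighborFinset_self v h
    · rw [hB, Finset.mem_biUnion] at h
      obtain ⟨w, _, hve⟩ := h
      exact (Finset.mem_erase.mp hve).1 rfl
  have hcard : (insert v (N ∪ B)).card ≤ Fintype.card V :=
    Finset.card_le_univ _
  rw [Finset.card_insert_of_notMem hvnot, Finset.card_union_of_disjoint hdisjNB] at hcard
  omega

/-- Lemma 3.3: in a girth ≥ 5 graph with 45 vertices, 145 edges, and maximum
degree `Δ`, one has `Σ_{deg v ≤ 5} (6 - deg v) ≥ 6Δ - 44`. -/
theorem stmt15 {V : Type*} [Fintype V] (G : SimpleGraph V) [DecidableRel G.Adj]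
    (hn : Fintype.card V = 45) (he : G.edgeFinset.card = 145)
    (hg : 5 ≤ G.girth) :
    6 * (G.maxDegree : ℤ) - 44
      ≤ ∑ v ∈ Finset.univ.filter (fun v => G.degree v ≤ 5),
          (6 - (G.degree v : ℤ)) := by
  classical
  have hne : Nonempty V := Fintype.card_pos_iff.mp (by omega)
  obtain ⟨v, hv⟩ := G.exists_maximal_degree_vertex
  have hkey := key G hg v
  rw [hn] at hkey
  set N := G.neighborFinset v with hN
  have hcardN : N.card = G.degree v := rfl
  have hsumZ : (∑ w ∈ N, (G.degree w : ℤ)) ≤ 44 := by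
    have : ((∑ w ∈ N, G.degree w : ℕ) : ℤ) ≤ 44 := by exact_mod_cast hkey
    push_cast at this
    exact this
  have h1 : 6 * (G.maxDegree : ℤ) - 44 ≤ ∑ w ∈ N, (6 - (G.degree w : ℤ)) := by
    rw [Finset.sum_sub_distrib, Finset.sum_const, hcardN, hv]
    have : (G.degree v : ℤ) = G.maxDegree := by rw [hv]
    rw [← hv, nsmul_eq_mul]
    linarith
  have h2 : ∑ w ∈ N, (6 - (G.degree w : ℤ))
      ≤ ∑ w ∈ N.filter (fun w => G.degree w ≤ 5), (6 - (G.degree w : ℤ)) := by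
    rw [← Finset.sum_filter_add_sum_filter_not N (fun w => G.degree w ≤ 5)
      (fun w => (6 - (G.degree w : ℤ)))]
    have hle : ∑ w ∈ N.filter (fun w => ¬ G.degree w ≤ 5), (6 - (G.degree w : ℤ)) ≤ 0 := by
      apply Finset.sum_nonpos
      intro x hx
      have := (Finset.mem_filter.mp hx).2
      have : 6 ≤ G.degree x := by omega
      have : (6 : ℤ) ≤ (G.degree x : ℤ) := by exact_mod_cast this
      linarith
    linarith
  have h3 : ∑ w ∈ N.filter (fun w => G.degree w ≤ 5), (6 - (G.degree w : ℤ))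
      ≤ ∑ w ∈ Finset.univ.filter (fun w => G.degree w ≤ 5), (6 - (G.degree w : ℤ)) := by
    apply Finset.sum_le_sum_of_subset_of_nonneg
    · exact Finset.filter_subset_filter _ (Finset.subset_univ N)
    · intro x hx _
      have := (Finset.mem_filter.mp hx).2
      have : (G.degree x : ℤ) ≤ 5 := by exact_mod_cast this
      linarith
  linarith
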